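/- arXiv:2507.16319 — 5 statements merged into one kernel-verified Lean document; each statement's English description precedes it below -/
import Mathlib

section
/- Let γ > 1 and λ > 0. There exists a constant C = C(γ) > 0 (independent of λ and s) such that for all s > 0: if s ≤ λ^{-2/(γ-1)} then C⁻¹ s^{(1+γ)/2} ≤ ∫₀ˢ dz/√((2/(γ-1)) z^{1-γ} + λ²) ≤ C s^{(1+γ)/2}, and if s ≥ λ^{-2/(γ-1)} then C⁻¹ s/λ ≤ ∫₀ˢ dz/√((2/(γ-1)) z^{1-γ} + λ²) ≤ C s/λ. -/
/-!
On `(0, s]` the integrand `1 / √(a z^(1-γ) + λ²)`, `a = 2/(γ-1)`, is bounded above both by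
`1/λ` and by `z^((γ-1)/2) / √a`; integrating either bound gives the upper estimates. For the
lower estimates, on `[s/2, s]` the radicand is at most `(a 2^(γ-1) + 1) · max (s^(1-γ), λ²)`,
and the threshold `s = λ^(-2/(γ-1))` is exactly where `s^(1-γ) = λ²`, so it decides which term
is the maximum.
-/

open Real intervalIntegral MeasureTheory Set

theorem intervalIntegral.integral_mono_on_of_nonneg {f g : ℝ → ℝ} {a b : ℝ} (hab : a ≤ b)
    (hf : ∀ x ∈ Ioc a b, 0 ≤ f x) (hg : IntervalIntegrable g volume a b)
    (hfg : ∀ x ∈ Ioc a b, f x ≤ g x) :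
    ∫ x in a..b, f x ≤ ∫ x in a..b, g x := by
  rw [integral_of_le hab, integral_of_le hab]
  exact integral_mono_of_nonneg ((ae_restrict_iff' measurableSet_Ioc).2 (.of_forall hf)) hg.1
    ((ae_restrict_iff' measurableSet_Ioc).2 (.of_forall hfg))

theorem Real.rpow_neg_two_div_rpow_one_sub {lam γ : ℝ} (hlam : 0 ≤ lam) (hγ : γ ≠ 1) :
    (lam ^ (-2 / (γ - 1))) ^ (1 - γ) = lam ^ 2 := by
  rw [← rpow_mul hlam, ← rpow_natCast]
  congr 1
  field_simp [sub_ne_zero.2 hγ]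
  push_cast
  ring

theorem Real.rpow_one_sub_le_of_half_le {γ s z : ℝ} (hγ : 1 ≤ γ) (hs : 0 < s)
    (hz : s / 2 ≤ z) :
    z ^ (1 - γ) ≤ 2 ^ (γ - 1) * s ^ (1 - γ) := calc
  z ^ (1 - γ) ≤ (s / 2) ^ (1 - γ) := rpow_le_rpow_of_nonpos (by positivity) hz (by linarith)
  _ = 2 ^ (γ - 1) * s ^ (1 - γ) := by
    rw [div_rpow hs.le zero_le_two, div_eq_mul_inv, ← rpow_neg zero_le_two, neg_sub, mul_comm]

theorem Real.sqrt_rpow {x : ℝ} (hx : 0 ≤ x) (p : ℝ) : √(x ^ p) = x ^ (p / 2) := by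
  rw [sqrt_eq_rpow, ← rpow_mul hx]
  ring_nf

theorem Real.div_sqrt_rpow_one_sub {γ s : ℝ} (hs : 0 < s) :
    s / √(s ^ (1 - γ)) = s ^ ((1 + γ) / 2) := by
  rw [sqrt_rpow hs.le, show (1 + γ) / 2 = 1 - (1 - γ) / 2 by ring, rpow_sub hs, rpow_one]

section TwoRegimes

variable {a γ lam s : ℝ}

theorem one_div_sqrt_add_sq_le {x : ℝ} (hx : 0 ≤ x) (hlam : 0 < lam) :
    1 / √(x + lam ^ 2) ≤ 1 / lam := by
  gcongr
  exact le_sqrt_of_sq_le (by linarith)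

theorem one_div_sqrt_mul_rpow_add_sq_le (ha : 0 < a) {z : ℝ} (hz : 0 < z) :
    1 / √(a * z ^ (1 - γ) + lam ^ 2) ≤ (√a)⁻¹ * z ^ ((γ - 1) / 2) := calc
  1 / √(a * z ^ (1 - γ) + lam ^ 2) ≤ 1 / √(a * z ^ (1 - γ)) := by
    gcongr
    exact le_add_of_nonneg_right (sq_nonneg lam)
  _ = (√a)⁻¹ * z ^ ((γ - 1) / 2) := by
    rw [sqrt_mul ha.le, sqrt_rpow hz.le, one_div, mul_inv, ← rpow_neg hz.le]
    ring_nf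

theorem intervalIntegrable_one_div_sqrt_mul_rpow_add_sq (ha : 0 ≤ a) (hlam : 0 < lam)
    (hs : 0 ≤ s) :
    IntervalIntegrable (fun z => 1 / √(a * z ^ (1 - γ) + lam ^ 2)) volume 0 s := by
  refine (intervalIntegrable_const (c := 1 / lam)).mono_fun (by measurability) ?_
  filter_upwards [ae_restrict_mem measurableSet_uIoc] with z hz
  rw [uIoc_of_le hs] at hz
  rw [norm_of_nonneg (by positivity), norm_of_nonneg (by positivity)]
  exact one_div_sqrt_add_sq_le (by have := hz.1.le; positivity) hlam

theorem integral_one_div_sqrt_mul_rpow_add_sq_le_div (ha : 0 ≤ a) (hlam : 0 < lam)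
    (hs : 0 ≤ s) :
    ∫ z in (0:ℝ)..s, 1 / √(a * z ^ (1 - γ) + lam ^ 2) ≤ s / lam := by
  refine (integral_mono_on_of_nonneg hs (fun _ _ => by positivity) intervalIntegrable_const
    fun z hz => one_div_sqrt_add_sq_le (by have := hz.1.le; positivity) hlam).trans_eq ?_
  simp [div_eq_mul_inv]

theorem integral_one_div_sqrt_mul_rpow_add_sq_le_rpow (ha : 0 < a) (hγ : -1 < γ) (hs : 0 ≤ s) :
    ∫ z in (0:ℝ)..s, 1 / √(a * z ^ (1 - γ) + lam ^ 2) ≤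
      2 / ((1 + γ) * √a) * s ^ ((1 + γ) / 2) := by
  have hexp : -1 < (γ - 1) / 2 := by linarith
  refine (integral_mono_on_of_nonneg hs (fun _ _ => by positivity)
    ((intervalIntegrable_rpow' hexp).const_mul _)
    fun z hz => one_div_sqrt_mul_rpow_add_sq_le ha hz.1).trans_eq ?_
  rw [intervalIntegral.integral_const_mul, integral_rpow (.inl hexp), zero_rpow (by linarith),
    show (γ - 1) / 2 + 1 = (1 + γ) / 2 by ring, sub_zero]
  field_simp

theorem le_integral_one_div_sqrt_mul_rpow_add_sq (ha : 0 ≤ a) (hγ : 1 ≤ γ) (hlam : 0 < lam)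
    (hs : 0 < s) {B : ℝ} (hsB : s ^ (1 - γ) ≤ B) (hlamB : lam ^ 2 ≤ B) :
    (2 * √(a * 2 ^ (γ - 1) + 1))⁻¹ * (s / √B) ≤
      ∫ z in (0:ℝ)..s, 1 / √(a * z ^ (1 - γ) + lam ^ 2) := by
  set K := a * 2 ^ (γ - 1) + 1
  have hB : 0 < B := (by positivity : 0 < lam ^ 2).trans_le hlamB
  have hbound :
      ∀ z ∈ Icc (s / 2) s, 1 / √(K * B) ≤ 1 / √(a * z ^ (1 - γ) + lam ^ 2) := by
    intro z hz
    have hz_pow := rpow_one_sub_le_of_half_le hγ hs hz.1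
    gcongr
    · have : 0 < z := by linarith [hz.1]
      positivity
    · calc a * z ^ (1 - γ) + lam ^ 2 ≤ a * (2 ^ (γ - 1) * B) + B := by
            gcongr; exact hz_pow.trans (by gcongr)
        _ = K * B := by ring
  have hf_int := intervalIntegrable_one_div_sqrt_mul_rpow_add_sq (γ := γ) ha hlam hs.le
  have hhalf : s / 2 ∈ uIcc 0 s := by
    rw [uIcc_of_le hs.le]; exact ⟨by positivity, by linarith⟩
  calc (2 * √K)⁻¹ * (s / √B) = ∫ _ in (s / 2)..s, 1 / √(K * B) := by
        rw [intervalIntegral.integral_const, smul_eq_mul, sqrt_mul (by positivity)]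
        field_simp
        ring
    _ ≤ ∫ z in (s / 2)..s, 1 / √(a * z ^ (1 - γ) + lam ^ 2) :=
        integral_mono_on (by linarith) intervalIntegrable_const
          (hf_int.mono_set (uIcc_subset_uIcc_right hhalf)) hbound
    _ ≤ ∫ z in (0:ℝ)..s, 1 / √(a * z ^ (1 - γ) + lam ^ 2) :=
        integral_mono_interval (by linarith) (by linarith) le_rfl
          (.of_forall fun _ => by positivity) hf_int

end TwoRegimes

theorem integral_two_regime_estimate (γ : ℝ) (hγ : 1 < γ) :
    ∃ C > 0, ∀ lam > (0:ℝ), ∀ s > (0:ℝ),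
      (s ≤ lam ^ (-2 / (γ - 1)) →
        C⁻¹ * s ^ ((1 + γ) / 2) ≤
          (∫ z in (0:ℝ)..s, 1 / Real.sqrt ((2 / (γ - 1)) * z ^ (1 - γ) + lam ^ 2)) ∧
        (∫ z in (0:ℝ)..s, 1 / Real.sqrt ((2 / (γ - 1)) * z ^ (1 - γ) + lam ^ 2)) ≤
          C * s ^ ((1 + γ) / 2)) ∧
      (lam ^ (-2 / (γ - 1)) ≤ s →
        C⁻¹ * (s / lam) ≤
          (∫ z in (0:ℝ)..s, 1 / Real.sqrt ((2 / (γ - 1)) * z ^ (1 - γ) + lam ^ 2)) ∧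
        (∫ z in (0:ℝ)..s, 1 / Real.sqrt ((2 / (γ - 1)) * z ^ (1 - γ) + lam ^ 2)) ≤
          C * (s / lam)) := by
  have ha : 0 < 2 / (γ - 1) := div_pos two_pos (sub_pos.2 hγ)
  set a := 2 / (γ - 1)
  set K := a * 2 ^ (γ - 1) + 1
  set C := max (2 * √K) (2 / ((1 + γ) * √a))
  have hC_lower : C⁻¹ ≤ (2 * √K)⁻¹ := inv_anti₀ (by positivity) (le_max_left _ _)
  have hC_one : 1 ≤ C := le_max_of_le_left <| by
    have : 1 ≤ √K := one_le_sqrt.2 (le_add_of_nonneg_left (by positivity))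
    linarith
  refine ⟨C, by positivity, fun lam hlam s hs =>
    ⟨fun hreg => ⟨?_, ?_⟩, fun hreg => ⟨?_, ?_⟩⟩⟩
  · have hB : lam ^ 2 ≤ s ^ (1 - γ) := by
      simpa only [rpow_neg_two_div_rpow_one_sub hlam.le hγ.ne'] using
        rpow_le_rpow_of_nonpos hs hreg (sub_nonpos.2 hγ.le)
    calc C⁻¹ * s ^ ((1 + γ) / 2) ≤ (2 * √K)⁻¹ * (s / √(s ^ (1 - γ))) := by
          rw [div_sqrt_rpow_one_sub hs]; gcongr
      _ ≤ _ := le_integral_one_div_sqrt_mul_rpow_add_sq ha.le hγ.le hlam hs le_rfl hB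
  · exact (integral_one_div_sqrt_mul_rpow_add_sq_le_rpow ha (by linarith) hs.le).trans
      (by gcongr; exact le_max_right _ _)
  · have hB : s ^ (1 - γ) ≤ lam ^ 2 := by
      simpa only [rpow_neg_two_div_rpow_one_sub hlam.le hγ.ne'] using
        rpow_le_rpow_of_nonpos (by positivity) hreg (sub_nonpos.2 hγ.le)
    calc C⁻¹ * (s / lam) ≤ (2 * √K)⁻¹ * (s / √(lam ^ 2)) := by
          rw [sqrt_sq hlam.le]; gcongr
      _ ≤ _ := le_integral_one_div_sqrt_mul_rpow_add_sq ha.le hγ.le hlam hs hB le_rfl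
  · exact (integral_one_div_sqrt_mul_rpow_add_sq_le_div ha.le hlam hs.le).trans
      (le_mul_of_one_le_left (by positivity) hC_one)
end

section
/- Let γ > 1 and φ = 2/(1+γ). Suppose V : (0,∞) → (0,∞) satisfies (V'(t))² = (2/(γ-1)) V(t)^{1-γ} + λ² for all t > 0, with V(0⁺) = 0, V increasing, and λ > 0. Then there is a constant C = C(γ) such that for all t > 0: C⁻¹ t^φ ≤ V(t) ≤ C t^φ when t ≤ λ^{(1+γ)/(1-γ)}, and C⁻¹ λ t ≤ V(t) ≤ C λ t when t ≥ λ^{(1+γ)/(1-γ)}. -/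
open Real Filter Set Topology

/-! With `c = 2 / (γ - 1)` and `V' ≥ 0`, the first integral gives
`max (√c V^((1-γ)/2)) λ ≤ V' ≤ √c V^((1-γ)/2) + λ`. The lower bound, integrated from `0⁺` for
`V^((1+γ)/2)` and for `V`, gives `(k t)^φ ≤ V` and `λ t ≤ V` with `k = (1+γ)√c/2`. Inserting
`(k t)^φ ≤ V` into the upper bound gives `V' ≤ ((k t)^φ + λ t)'`, hence `V ≤ (k t)^φ + λ t`.
The two terms `t^φ` and `λ t` cross exactly at `t = λ^((1+γ)/(1-γ))`. -/

theorem le_of_hasDerivAt_le_of_tendsto_nhdsGT {f g f' g' : ℝ → ℝ} {a l x : ℝ}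
    (hf : ∀ y > a, HasDerivAt f (f' y) y) (hg : ∀ y > a, HasDerivAt g (g' y) y)
    (hfg' : ∀ y > a, f' y ≤ g' y) (hfl : Tendsto f (𝓝[>] a) (𝓝 l))
    (hgl : Tendsto g (𝓝[>] a) (𝓝 l)) (hx : a < x) : f x ≤ g x := by
  have hmono : MonotoneOn (fun y => g y - f y) (Ioi a) := by
    refine monotoneOn_of_hasDerivWithinAt_nonneg (f' := fun y => g' y - f' y) (convex_Ioi a)
      ?_ ?_ ?_
    · exact fun y hy => ((hg y hy).sub (hf y hy)).continuousAt.continuousWithinAt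
    · rw [interior_Ioi]
      exact fun y hy => ((hg y hy).sub (hf y hy)).hasDerivWithinAt
    · rw [interior_Ioi]
      exact fun y hy => sub_nonneg.2 (hfg' y hy)
  have hlim : Tendsto (fun y => g y - f y) (𝓝[>] a) (𝓝 0) := by simpa using hgl.sub hfl
  refine sub_nonneg.1 (le_of_tendsto hlim ?_)
  filter_upwards [Ioc_mem_nhdsGT hx] with y hy
  exact hmono hy.1 hx hy.2

theorem HasDerivAt.nonneg_of_monotoneOn_Ioi {f : ℝ → ℝ} {f' a x : ℝ} (hf : HasDerivAt f f' x)
    (hmono : MonotoneOn f (Ioi a)) (hx : a < x) : 0 ≤ f' := by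
  refine hf.hasDerivWithinAt.nonneg_of_monotoneOn (s := Ioi x) ?_
    (hmono.mono (Ioi_subset_Ioi hx.le))
  rw [accPt_principal_iff_nhdsWithin, sdiff_singleton_eq_self self_notMem_Ioi]
  infer_instance

theorem le_and_le_add_of_sq_eq_sq_add_sq {a b d : ℝ} (ha : 0 ≤ a) (hb : 0 ≤ b) (hd : 0 ≤ d)
    (h : d ^ 2 = a ^ 2 + b ^ 2) : a ≤ d ∧ b ≤ d ∧ d ≤ a + b := by
  refine ⟨?_, ?_, ?_⟩ <;> nlinarith

theorem tendsto_const_mul_nhdsGT_zero (c : ℝ) : Tendsto (fun t => c * t) (𝓝[>] 0) (𝓝 0) :=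
  tendsto_nhdsWithin_of_tendsto_nhds (by simpa using (continuous_const_mul c).tendsto 0)

section GrowthOfSolutions

variable {p b : ℝ} {V V' : ℝ → ℝ}

theorem rpow_le_of_mul_rpow_le_deriv (hp : 0 < p) (hb : 0 ≤ b) (hpos : ∀ t > 0, 0 < V t)
    (hV : ∀ t > 0, HasDerivAt V (V' t) t) (hlim : Tendsto V (𝓝[>] 0) (𝓝 0))
    (hV' : ∀ t > 0, b * V t ^ (1 - p) ≤ V' t) {t : ℝ} (ht : 0 < t) :
    (p * b * t) ^ p⁻¹ ≤ V t := by
  have hcomp : p * b * t ≤ V t ^ p := by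
    refine le_of_hasDerivAt_le_of_tendsto_nhdsGT (f' := fun _ => p * b)
      (g' := fun s => V' s * p * V s ^ (p - 1)) (fun s _ => ?_)
      (fun s hs => (hV s hs).rpow_const (Or.inl (hpos s hs).ne')) (fun s hs => ?_)
      (tendsto_const_mul_nhdsGT_zero _) (hlim.rpow_const_nhds_zero hp) ht
    · exact hasDerivAt_const_mul (p * b)
    · have hcancel : V s ^ (1 - p) * V s ^ (p - 1) = 1 := by
        rw [← rpow_add (hpos s hs)]; simp
      calc p * b = b * V s ^ (1 - p) * (p * V s ^ (p - 1)) := by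
            linear_combination (-(p * b)) * hcancel
        _ ≤ V' s * (p * V s ^ (p - 1)) := mul_le_mul_of_nonneg_right (hV' s hs)
            (mul_nonneg hp.le (rpow_nonneg (hpos s hs).le (p - 1)))
        _ = V' s * p * V s ^ (p - 1) := by ring
  calc (p * b * t) ^ p⁻¹ ≤ (V t ^ p) ^ p⁻¹ := by gcongr
    _ = V t := rpow_rpow_inv (hpos t ht).le hp.ne'

theorem le_rpow_add_mul_of_deriv_le_mul_rpow_add (hp : 1 ≤ p) (hb : 0 < b) (lam : ℝ)
    (hV : ∀ t > 0, HasDerivAt V (V' t) t)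
    (hlim : Tendsto V (𝓝[>] 0) (𝓝 0)) (hlow : ∀ t > 0, (p * b * t) ^ p⁻¹ ≤ V t)
    (hV' : ∀ t > 0, V' t ≤ b * V t ^ (1 - p) + lam) {t : ℝ} (ht : 0 < t) :
    V t ≤ (p * b * t) ^ p⁻¹ + lam * t := by
  have hp0 : 0 < p := by linarith
  refine le_of_hasDerivAt_le_of_tendsto_nhdsGT (g := fun s => (p * b * s) ^ p⁻¹ + lam * s)
    (g' := fun s => b * (p * b * s) ^ (p⁻¹ - 1) + lam) hV (fun s hs => ?_) (fun s hs => ?_)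
    hlim ?_ ht
  · refine (((hasDerivAt_const_mul (p * b)).rpow_const (p := p⁻¹) (Or.inl (by positivity))).add
      (hasDerivAt_const_mul lam)).congr_deriv ?_
    field_simp
  · have hbase : 0 < (p * b * s) ^ p⁻¹ := by positivity
    have hexp : ((p * b * s) ^ p⁻¹) ^ (1 - p) = (p * b * s) ^ (p⁻¹ - 1) := by
      rw [← rpow_mul (by positivity)]
      field_simp
    calc V' s ≤ b * V s ^ (1 - p) + lam := hV' s hs
      _ ≤ b * ((p * b * s) ^ p⁻¹) ^ (1 - p) + lam := by
          gcongr b * ?_ + lam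
          exact rpow_le_rpow_of_nonpos hbase (hlow s hs) (by linarith)
      _ = b * (p * b * s) ^ (p⁻¹ - 1) + lam := by rw [hexp]
  · simpa using ((tendsto_const_mul_nhdsGT_zero (p * b)).rpow_const_nhds_zero
      (inv_pos.2 hp0)).add (tendsto_const_mul_nhdsGT_zero lam)

end GrowthOfSolutions

section Crossover

variable {φ lam t : ℝ}

theorem mul_le_rpow_self_iff (hφ : φ < 1) (hlam : 0 < lam) (ht : 0 < t) :
    lam * t ≤ t ^ φ ↔ t ≤ lam ^ (φ - 1)⁻¹ := by
  have ht0 : 0 < lam ^ (φ - 1)⁻¹ := rpow_pos_of_pos hlam _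
  rw [← rpow_le_rpow_iff_of_neg (z := φ - 1) ht0 ht (by linarith),
    rpow_inv_rpow hlam.le (by linarith), rpow_sub_one ht.ne', le_div_iff₀ ht]

theorem rpow_self_le_mul_iff (hφ : φ < 1) (hlam : 0 < lam) (ht : 0 < t) :
    t ^ φ ≤ lam * t ↔ lam ^ (φ - 1)⁻¹ ≤ t := by
  have ht0 : 0 < lam ^ (φ - 1)⁻¹ := rpow_pos_of_pos hlam _
  rw [← rpow_le_rpow_iff_of_neg (z := φ - 1) ht ht0 (by linarith),
    rpow_inv_rpow hlam.le (by linarith), rpow_sub_one ht.ne', div_le_iff₀ ht]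

end Crossover

theorem two_regime_bounds {K x y v : ℝ} (hK : 0 < K) (hx : 0 ≤ x) (hy : 0 ≤ y)
    (hxv : K * x ≤ v) (hyv : y ≤ v) (hv : v ≤ K * x + y) :
    (y ≤ x → (K + 1 + K⁻¹)⁻¹ * x ≤ v ∧ v ≤ (K + 1 + K⁻¹) * x) ∧
      (x ≤ y → (K + 1 + K⁻¹)⁻¹ * y ≤ v ∧ v ≤ (K + 1 + K⁻¹) * y) := by
  have hK' : 0 < K⁻¹ := inv_pos.2 hK
  have hCK : (K + 1 + K⁻¹)⁻¹ ≤ K := inv_le_of_inv_le₀ hK (by linarith)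
  have hC1 : (K + 1 + K⁻¹)⁻¹ ≤ 1 := inv_le_one_of_one_le₀ (by linarith)
  refine ⟨fun hyx => ⟨?_, ?_⟩, fun hxy => ⟨?_, ?_⟩⟩
  · nlinarith
  · nlinarith
  · nlinarith
  · nlinarith

theorem first_order_ode_growth (γ φ : ℝ) (hγ : 1 < γ) (hφ : φ = 2 / (1 + γ)) :
    ∃ C > 0, ∀ lam > (0:ℝ), ∀ V V' : ℝ → ℝ,
      (∀ t > (0:ℝ), 0 < V t) →
      (∀ t > (0:ℝ), HasDerivAt V (V' t) t) →
      (∀ t > (0:ℝ), (V' t) ^ 2 = (2 / (γ - 1)) * (V t) ^ (1 - γ) + lam ^ 2) →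
      Tendsto V (nhdsWithin 0 (Set.Ioi 0)) (nhds 0) →
      StrictMonoOn V (Set.Ioi 0) →
      ∀ t > (0:ℝ),
        (t ≤ lam ^ ((1 + γ) / (1 - γ)) → C⁻¹ * t ^ φ ≤ V t ∧ V t ≤ C * t ^ φ) ∧
        (lam ^ ((1 + γ) / (1 - γ)) ≤ t →
          C⁻¹ * (lam * t) ≤ V t ∧ V t ≤ C * (lam * t)) := by
  have hγ1 : 0 < γ - 1 := by linarith
  set p := (1 + γ) / 2 with hp_def
  set b := √(2 / (γ - 1))
  have hp : 1 < p := by linarith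
  have hb : 0 < b := by positivity
  have hφp : φ = p⁻¹ := by rw [hφ, inv_div]
  have hφ1 : φ < 1 := by rw [hφp]; exact inv_lt_one_of_one_lt₀ hp
  have hcross : (1 + γ) / (1 - γ) = (φ - 1)⁻¹ := by
    rw [hφ]; field_simp; ring
  set K := (p * b) ^ φ
  refine ⟨K + 1 + K⁻¹, by positivity,
    fun lam hlam V V' hVpos hVd hVode hVlim hVmono t ht => ?_⟩
  have hrate : ∀ s > 0, b * V s ^ (1 - p) ≤ V' s ∧ lam ≤ V' s ∧
      V' s ≤ b * V s ^ (1 - p) + lam := by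
    intro s hs
    refine le_and_le_add_of_sq_eq_sq_add_sq (mul_nonneg hb.le (rpow_nonneg (hVpos s hs).le _))
      hlam.le ((hVd s hs).nonneg_of_monotoneOn_Ioi hVmono.monotoneOn hs) ?_
    rw [hVode s hs, mul_pow, sq_sqrt (by positivity), ← rpow_mul_natCast (hVpos s hs).le,
      hp_def]
    ring_nf
  have hpow : ∀ s > 0, (p * b * s) ^ p⁻¹ ≤ V s := fun s hs =>
    rpow_le_of_mul_rpow_le_deriv (by linarith) hb.le hVpos hVd hVlim
      (fun s hs => (hrate s hs).1) hs
  have hlin : lam * t ≤ V t :=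
    le_of_hasDerivAt_le_of_tendsto_nhdsGT (fun _ _ => hasDerivAt_const_mul lam) hVd
      (fun s hs => (hrate s hs).2.1) (tendsto_const_mul_nhdsGT_zero lam) hVlim ht
  have hup := le_rpow_add_mul_of_deriv_le_mul_rpow_add hp.le hb lam hVd hVlim hpow
    (fun s hs => (hrate s hs).2.2) ht
  have hpow_t := hpow t ht
  rw [mul_rpow (by positivity) ht.le, ← hφp] at hpow_t hup
  rw [hcross, ← mul_le_rpow_self_iff hφ1 hlam ht, ← rpow_self_le_mul_iff hφ1 hlam ht]
  exact two_regime_bounds (by positivity) (by positivity) (by positivity) hpow_t hlin hup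
end

section
/- Let γ ∈ (1,2) and C ≥ 1. Suppose (S_k)_{k≥0} is a sequence with S_0 = 0, S_1 ≥ 1/C, S_k nondecreasing, S_{k+1} ≤ C S_k for all k ≥ 1, and C⁻¹ S_k^{-γ} ≤ S_k - S_{k-1} ≤ C S_k^{-γ} for all k ≥ 1. Then there exists C' = C'(γ, C) such that (C')⁻¹ k^{1/(1+γ)} ≤ S_k ≤ C' k^{1/(1+γ)} for all k ≥ 1. -/
/-!
With `T k = S k ^ (1 + γ)`, the mean value theorem writes `T (k + 1) - T k` as
`(1 + γ) ξ ^ γ (S (k + 1) - S k)` for some `ξ` between `S k` and `S (k + 1)`. The increment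
hypothesis makes this comparable to `(ξ / S (k + 1)) ^ γ`, which lies between `C ^ (-γ)` (because
`S (k + 1) ≤ C S k`) and `1`. So `T` has increments bounded above and below by positive constants,
hence `T k ≍ k`, and taking `(1 + γ)`-th roots gives `S k ≍ k ^ (1 / (1 + γ))`.
-/

open Real Set

namespace Real

lemma rpow_sub_rpow_mem_Icc {p a b : ℝ} (hp : 1 ≤ p) (hb : 0 ≤ b) (hba : b ≤ a) :
    a ^ p - b ^ p ∈ Icc (p * b ^ (p - 1) * (a - b)) (p * a ^ (p - 1) * (a - b)) := by
  rcases hba.eq_or_lt with rfl | hba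
  · simp
  obtain ⟨c, ⟨hbc, hca⟩, hc⟩ := exists_hasDerivAt_eq_slope (fun x => x ^ p)
    (fun x => p * x ^ (p - 1)) hba
    (continuousOn_id.rpow_const fun _ _ => Or.inr (by linarith))
    (fun _ _ => hasDerivAt_rpow_const (Or.inr hp))
  rw [eq_div_iff (sub_pos.2 hba).ne'] at hc
  rw [← hc]
  have hc0 : 0 ≤ c := by linarith
  have hba' : 0 ≤ a - b := by linarith
  constructor <;> gcongr

lemma mem_Icc_mul_rpow_of_rpow_mem_Icc {p a b x y : ℝ} (hp : 0 < p) (ha : 0 ≤ a) (hb : 0 ≤ b)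
    (hx : 0 ≤ x) (hy : 0 ≤ y) (h : x ^ p ∈ Icc (y * a) (y * b)) :
    x ∈ Icc (a ^ (1 / p) * y ^ (1 / p)) (b ^ (1 / p) * y ^ (1 / p)) := by
  have hx' : x = (x ^ p) ^ (1 / p) := by
    rw [← rpow_mul hx, mul_one_div_cancel hp.ne', rpow_one]
  rw [← mul_rpow ha hy, ← mul_rpow hb hy, hx']
  constructor <;> gcongr <;> linarith [h.1, h.2]

end Real

lemma mem_Icc_mul_of_forall_sub_mem_Icc {T : ℕ → ℝ} {c d : ℝ} (h0 : T 0 = 0)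
    (h : ∀ k, T (k + 1) - T k ∈ Icc c d) (n : ℕ) : T n ∈ Icc (n * c) (n * d) := by
  induction n with
  | zero => simp [h0]
  | succ n ih =>
    push_cast
    constructor <;> linarith [ih.1, ih.2, (h n).1, (h n).2]

section

variable {γ C a b : ℝ}

lemma rpow_one_add_sub_rpow_one_add_le (hγ : 0 ≤ γ) (hb : 0 ≤ b) (hba : b ≤ a) (ha : 0 < a)
    (h : a - b ≤ C * a ^ (-γ)) : a ^ (1 + γ) - b ^ (1 + γ) ≤ (1 + γ) * C :=
  calc a ^ (1 + γ) - b ^ (1 + γ) ≤ (1 + γ) * a ^ γ * (a - b) := by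
        simpa using (rpow_sub_rpow_mem_Icc (p := 1 + γ) (by linarith) hb hba).2
    _ ≤ (1 + γ) * a ^ γ * (C * a ^ (-γ)) := by gcongr
    _ = (1 + γ) * C := by
        rw [rpow_neg ha.le]
        field_simp

lemma le_rpow_one_add_sub_rpow_one_add (hγ : 0 ≤ γ) (hC : 0 < C) (hb : 0 < b) (hba : b ≤ a)
    (hab : a ≤ C * b) (h : C⁻¹ * a ^ (-γ) ≤ a - b) :
    (1 + γ) * C⁻¹ ^ (1 + γ) ≤ a ^ (1 + γ) - b ^ (1 + γ) := by
  have ha : 0 < a := hb.trans_le hba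
  calc (1 + γ) * C⁻¹ ^ (1 + γ) = (1 + γ) * (a / C) ^ γ * (C⁻¹ * a ^ (-γ)) := by
        rw [div_rpow ha.le hC.le, rpow_neg ha.le, inv_rpow hC.le, rpow_add hC, rpow_one]
        field_simp
    _ ≤ (1 + γ) * b ^ γ * (a - b) := by
        gcongr
        rwa [div_le_iff₀' hC]
    _ ≤ a ^ (1 + γ) - b ^ (1 + γ) := by
        simpa using (rpow_sub_rpow_mem_Icc (p := 1 + γ) (by linarith) hb.le hba).1

end

theorem discrete_ode_subcritical_general (γ C : ℝ) (hγ1 : 1 < γ) (hC : 1 ≤ C)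
    (S : ℕ → ℝ) (h0 : S 0 = 0) (h1 : 1 / C ≤ S 1) (hmono : Monotone S)
    (hcomp : ∀ k : ℕ, 1 ≤ k → S (k + 1) ≤ C * S k)
    (hinc : ∀ k : ℕ, 1 ≤ k →
      C⁻¹ * (S k) ^ (-γ) ≤ S k - S (k - 1) ∧ S k - S (k - 1) ≤ C * (S k) ^ (-γ)) :
    ∃ C' > 0, ∀ k : ℕ, 1 ≤ k →
      C'⁻¹ * (k:ℝ) ^ (1 / (1 + γ)) ≤ S k ∧ S k ≤ C' * (k:ℝ) ^ (1 / (1 + γ)) := by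
  have hC0 : 0 < C := by linarith
  have hp : 0 < 1 + γ := by linarith
  have hSpos : ∀ k, 1 ≤ k → 0 < S k := fun k hk =>
    (one_div_pos.2 hC0).trans_le (h1.trans (hmono hk))
  have hstep : ∀ k : ℕ,
      S (k + 1) ^ (1 + γ) - S k ^ (1 + γ) ∈ Icc (C⁻¹ ^ (1 + γ)) ((1 + γ) * C) := by
    intro k
    obtain ⟨hlo, hhi⟩ := hinc (k + 1) le_add_self
    rw [Nat.add_sub_cancel] at hlo hhi
    have hS : 0 ≤ S k := h0 ▸ hmono k.zero_le
    refine ⟨?_, rpow_one_add_sub_rpow_one_add_le (by linarith) hS (hmono k.le_succ)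
      (hSpos _ le_add_self) hhi⟩
    -- `hcomp` says nothing at `k = 0`; there `h1` bounds `T 1 = S 1 ^ (1 + γ)` directly.
    rcases k.eq_zero_or_pos with rfl | hk
    · rw [h0, zero_rpow hp.ne', sub_zero, ← one_div]
      gcongr
    · exact (le_mul_of_one_le_left (by positivity) (by linarith)).trans
        (le_rpow_one_add_sub_rpow_one_add (by linarith) hC0 (hSpos k hk) (hmono k.le_succ)
          (hcomp k hk) hlo)
  have hT := mem_Icc_mul_of_forall_sub_mem_Icc (T := fun k => S k ^ (1 + γ))
    (by simp [h0, zero_rpow hp.ne']) hstep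
  refine ⟨max C (((1 + γ) * C) ^ (1 / (1 + γ))), lt_max_of_lt_left hC0, fun k hk => ?_⟩
  obtain ⟨hlo, hhi⟩ := mem_Icc_mul_rpow_of_rpow_mem_Icc hp (by positivity) (by positivity)
    (hSpos k hk).le k.cast_nonneg (hT k)
  rw [← rpow_mul (by positivity), mul_one_div_cancel hp.ne', rpow_one] at hlo
  exact ⟨le_trans (by gcongr; exact le_max_left _ _) hlo,
    hhi.trans (by gcongr; exact le_max_right _ _)⟩

theorem discrete_ode_subcritical (γ C : ℝ) (hγ1 : 1 < γ) (hγ2 : γ < 2) (hC : 1 ≤ C)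
    (S : ℕ → ℝ) (h0 : S 0 = 0) (h1 : 1 / C ≤ S 1) (hmono : Monotone S)
    (hcomp : ∀ k : ℕ, 1 ≤ k → S (k + 1) ≤ C * S k)
    (hinc : ∀ k : ℕ, 1 ≤ k →
      C⁻¹ * (S k) ^ (-γ) ≤ S k - S (k - 1) ∧ S k - S (k - 1) ≤ C * (S k) ^ (-γ)) :
    ∃ C' > 0, ∀ k : ℕ, 1 ≤ k →
      C'⁻¹ * (k:ℝ) ^ (1 / (1 + γ)) ≤ S k ∧ S k ≤ C' * (k:ℝ) ^ (1 / (1 + γ)) :=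
  discrete_ode_subcritical_general γ C hγ1 hC S h0 h1 hmono hcomp hinc
end

section
/- Let γ > 2 and C ≥ 1. Suppose (S_k)_{k≥0} is a sequence with S_0 = 0, S_1 ≥ 1/C, S_k nondecreasing, S_{k+1} ≤ C S_k for all k ≥ 1, and C⁻¹ S_k^{2/(1-γ)} ≤ S_k - S_{k-1} ≤ C S_k^{2/(1-γ)} for all k ≥ 1. Then there exists C' = C'(γ, C) such that (C')⁻¹ k^{(γ-1)/(1+γ)} ≤ S_k ≤ C' k^{(γ-1)/(1+γ)} for all k ≥ 1. -/
/-!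
Put `p = (1 + γ) / (γ - 1) > 1`, so that `2 / (1 - γ) = 1 - p` and the hypothesis reads
`S k - S (k - 1) ≍ S k ^ (1 - p)`. By convexity of `x ↦ x ^ p`, the increment of `T k = S k ^ p`
lies between `p a ^ (p - 1) (b - a)` and `p b ^ (p - 1) (b - a)` for `a = S k`, `b = S (k + 1)`,
and `b ≤ C a` makes both comparable to `b ^ (p - 1) (b - a) ≍ 1`. Hence `T k ≍ k`, i.e.
`S k ≍ k ^ (1 / p)`.
-/

open Real

lemma rpow_add_mul_rpow_sub_one_mul_sub_le {c d p : ℝ} (hc : 0 < c) (hd : 0 ≤ d)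
    (hp : 1 ≤ p) :
    c ^ p + p * c ^ (p - 1) * (d - c) ≤ d ^ p := by
  have hbern := one_add_mul_self_le_rpow_one_add (s := (d - c) / c)
    (by rw [le_div_iff₀ hc]; linarith) hp
  rw [show 1 + (d - c) / c = d / c by field_simp; ring, div_rpow hd hc.le,
    le_div_iff₀ (rpow_pos_of_pos hc p)] at hbern
  calc c ^ p + p * c ^ (p - 1) * (d - c) = (1 + p * ((d - c) / c)) * c ^ p := by
        rw [rpow_sub hc, rpow_one]; field_simp
    _ ≤ d ^ p := hbern

lemma rpow_sub_rpow_le_of_sub_le {a b C p : ℝ} (ha : 0 ≤ a) (hb : 0 < b) (hp : 1 ≤ p)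
    (h : b - a ≤ C * b ^ (1 - p)) : b ^ p - a ^ p ≤ p * C := by
  have htangent := rpow_add_mul_rpow_sub_one_mul_sub_le hb ha hp
  have hcancel : b ^ (p - 1) * b ^ (1 - p) = 1 := by
    rw [← rpow_add hb, sub_add_sub_cancel', sub_self, rpow_zero]
  calc b ^ p - a ^ p ≤ p * b ^ (p - 1) * (b - a) := by linarith
    _ ≤ p * b ^ (p - 1) * (C * b ^ (1 - p)) := by gcongr
    _ = p * C := by rw [mul_mul_mul_comm, hcancel, mul_one, mul_comm]

lemma inv_rpow_le_rpow_sub_rpow_of_le_sub {a b C p : ℝ} (ha : 0 < a) (hab : a ≤ b)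
    (hba : b ≤ C * a) (hp : 1 ≤ p) (h : C⁻¹ * b ^ (1 - p) ≤ b - a) :
    C⁻¹ ^ p ≤ b ^ p - a ^ p := by
  have hb : 0 < b := ha.trans_le hab
  have hC : 0 < C := by nlinarith
  have htangent := rpow_add_mul_rpow_sub_one_mul_sub_le ha hb.le hp
  have hratio : C⁻¹ ^ (p - 1) ≤ a ^ (p - 1) * b ^ (1 - p) := by
    rw [← neg_sub p 1, rpow_neg hb.le, ← div_eq_mul_inv, ← div_rpow ha.le hb.le]
    gcongr
    rw [le_div_iff₀ hb, inv_mul_le_iff₀ hC]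
    exact hba
  calc C⁻¹ ^ p = C⁻¹ * C⁻¹ ^ (p - 1) := by
        rw [rpow_sub (by positivity), rpow_one]; field_simp
    _ ≤ p * (C⁻¹ * (a ^ (p - 1) * b ^ (1 - p))) := by
        rw [← one_mul (C⁻¹ * C⁻¹ ^ (p - 1))]
        gcongr
    _ = p * a ^ (p - 1) * (C⁻¹ * b ^ (1 - p)) := by ring
    _ ≤ p * a ^ (p - 1) * (b - a) := by gcongr
    _ ≤ b ^ p - a ^ p := by linarith

lemma sub_mem_Icc_mul_of_forall_succ_sub_mem_Icc {T : ℕ → ℝ} {c d : ℝ}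
    (h : ∀ k, T (k + 1) - T k ∈ Set.Icc c d) (n : ℕ) :
    T n - T 0 ∈ Set.Icc (c * n) (d * n) := by
  induction n with
  | zero => simp
  | succ n ih =>
    obtain ⟨hlo, hhi⟩ := h n
    push_cast
    constructor <;> linarith [ih.1, ih.2]

lemma rpow_succ_sub_rpow_mem_Icc {S : ℕ → ℝ} {C p : ℝ} (hC : 0 < C) (hp : 1 ≤ p)
    (h0 : S 0 = 0) (h1 : C⁻¹ ≤ S 1) (hmono : Monotone S)
    (hcomp : ∀ k : ℕ, 1 ≤ k → S (k + 1) ≤ C * S k)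
    (hinc : ∀ k : ℕ, 1 ≤ k →
      C⁻¹ * S k ^ (1 - p) ≤ S k - S (k - 1) ∧ S k - S (k - 1) ≤ C * S k ^ (1 - p))
    (k : ℕ) : S (k + 1) ^ p - S k ^ p ∈ Set.Icc (C⁻¹ ^ p) (p * C) := by
  have hS1 : 0 < S 1 := (inv_pos.2 hC).trans_le h1
  have hSk : 0 ≤ S k := h0 ▸ hmono (Nat.zero_le k)
  obtain ⟨hlo, hhi⟩ := hinc (k + 1) (Nat.le_add_left 1 k)
  rw [Nat.add_sub_cancel] at hlo hhi
  refine ⟨?_, rpow_sub_rpow_le_of_sub_le hSk (hS1.trans_le (hmono (by omega))) hp hhi⟩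
  rcases Nat.eq_zero_or_pos k with rfl | hk
  · rw [h0, zero_rpow (by positivity), sub_zero]
    gcongr
  · exact inv_rpow_le_rpow_sub_rpow_of_le_sub (hS1.trans_le (hmono hk)) (hmono k.le_succ)
      (hcomp k hk) hp hlo

theorem discrete_ode_supercritical (γ C : ℝ) (hγ : 2 < γ) (hC : 1 ≤ C)
    (S : ℕ → ℝ) (h0 : S 0 = 0) (h1 : 1 / C ≤ S 1) (hmono : Monotone S)
    (hcomp : ∀ k : ℕ, 1 ≤ k → S (k + 1) ≤ C * S k)
    (hinc : ∀ k : ℕ, 1 ≤ k →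
      C⁻¹ * (S k) ^ (2 / (1 - γ)) ≤ S k - S (k - 1) ∧
      S k - S (k - 1) ≤ C * (S k) ^ (2 / (1 - γ))) :
    ∃ C' > 0, ∀ k : ℕ, 1 ≤ k →
      C'⁻¹ * (k:ℝ) ^ ((γ - 1) / (1 + γ)) ≤ S k ∧
      S k ≤ C' * (k:ℝ) ^ ((γ - 1) / (1 + γ)) := by
  set p := (1 + γ) / (γ - 1) with hp_def
  have hp : 1 ≤ p := by rw [hp_def, le_div_iff₀ (by linarith)]; linarith
  have hexp : 2 / (1 - γ) = 1 - p := by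
    rw [hp_def]; field_simp [show 1 - γ ≠ 0 by linarith, show γ - 1 ≠ 0 by linarith]; ring
  have hC0 : 0 < C := by linarith
  rw [one_div] at h1
  rw [hexp] at hinc
  have hT := sub_mem_Icc_mul_of_forall_succ_sub_mem_Icc (T := fun k => S k ^ p)
    (rpow_succ_sub_rpow_mem_Icc hC0 hp h0 h1 hmono hcomp hinc)
  refine ⟨max C ((p * C) ^ p⁻¹), by positivity, fun k _ => ?_⟩
  obtain ⟨hlo, hhi⟩ := hT k
  rw [h0, zero_rpow (by positivity), sub_zero] at hlo hhi
  have hSk : 0 ≤ S k := h0 ▸ hmono (Nat.zero_le k)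
  rw [show (γ - 1) / (1 + γ) = p⁻¹ by rw [hp_def, inv_div]]
  constructor
  · calc (max C ((p * C) ^ p⁻¹))⁻¹ * (k : ℝ) ^ p⁻¹ ≤ C⁻¹ * (k : ℝ) ^ p⁻¹ := by
          gcongr; exact le_max_left _ _
      _ = (C⁻¹ ^ p * k) ^ p⁻¹ := by
          rw [mul_rpow (by positivity) (by positivity),
            rpow_rpow_inv (by positivity) (by positivity)]
      _ ≤ S k := (rpow_inv_le_iff_of_pos (by positivity) hSk (by positivity)).2 hlo
  · calc S k ≤ (p * C * k) ^ p⁻¹ :=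
          (le_rpow_inv_iff_of_pos hSk (by positivity) (by positivity)).2 hhi
      _ = (p * C) ^ p⁻¹ * (k : ℝ) ^ p⁻¹ := mul_rpow (by positivity) (by positivity)
      _ ≤ max C ((p * C) ^ p⁻¹) * (k : ℝ) ^ p⁻¹ := by gcongr; exact le_max_right _ _
end

section
/- Let C ≥ 1. Suppose (S_k)_{k≥0} is a sequence with S_0 = 0, S_1 ≥ 2, S_k nondecreasing, S_{k+1} ≤ C S_k for all k ≥ 1, and C⁻¹ S_k^{-2} ln(S_k) ≤ S_k - S_{k-1} ≤ C S_k^{-2} ln(S_k) for all k ≥ 2. Then there exists C' = C'(C) such that for all k ≥ 2: (C')⁻¹ (k ln k)^{1/3} ≤ S_k ≤ C' (k ln k)^{1/3}. -/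
/-!
Put `a_k = S_k ^ 3`. Since `S_{k+1}^3 - S_k^3` lies between `(S_{k+1} - S_k) S_{k+1}^2` and
three times that, the hypothesis says `a_{k+1} - a_k ≍ log S_{k+1}`, which plays the role of
`T_{k+1} - T_k ≍ 1` for `T = S^3 / log S`.

Upper bound: summing gives `a_k ≲ k log S_k`; with `log S_k ≤ S_k` this forces `S_k^2 ≲ k`,
hence `log S_k ≲ log k` and `a_k ≲ k log k`.

Lower bound: the increments are at least `C⁻¹ log 2`, so `a_k ≳ k` and therefore
`log S_m ≥ (log m) / 6` for large `m`. Summing the increments from `m = ⌊k/2⌋` to `2m ≤ k` then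
gives `a_k ≥ C⁻¹ m log S_m ≳ k log k`; for the finitely many small `k`, `S_k ≥ 2` suffices.
-/

open Real

lemma sub_mul_sq_le_pow_three_sub_pow_three {x y : ℝ} (hx : 0 ≤ x) (hxy : x ≤ y) :
    (y - x) * y ^ 2 ≤ y ^ 3 - x ^ 3 := by
  nlinarith [mul_nonneg (sub_nonneg.2 hxy) (mul_nonneg hx (add_nonneg hx (hx.trans hxy)))]

lemma pow_three_sub_pow_three_le {x y : ℝ} (hx : 0 ≤ x) (hxy : x ≤ y) :
    y ^ 3 - x ^ 3 ≤ 3 * ((y - x) * y ^ 2) := by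
  nlinarith [mul_nonneg (mul_self_nonneg (y - x)) (by linarith : 0 ≤ 2 * y + x)]

lemma add_mul_le_of_le_sub {f : ℕ → ℝ} {m n : ℕ} {c : ℝ}
    (h : ∀ j, m ≤ j → j < m + n → c ≤ f (j + 1) - f j) : f m + n * c ≤ f (m + n) := by
  induction n with
  | zero => simp
  | succ n ih =>
    have := h (m + n) (by omega) (by omega)
    rw [← add_assoc]
    push_cast
    linarith [ih fun j hmj hj => h j hmj (by omega)]

lemma le_add_mul_of_sub_le {f : ℕ → ℝ} {m n : ℕ} {c : ℝ}
    (h : ∀ j, m ≤ j → j < m + n → f (j + 1) - f j ≤ c) : f (m + n) ≤ f m + n * c := by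
  have := add_mul_le_of_le_sub (f := fun j => -f j) (c := -c) fun j hmj hj => by
    linarith [h j hmj hj]
  linarith

lemma rpow_one_third_pow_three {t : ℝ} (ht : 0 ≤ t) : (t ^ (1 / 3 : ℝ)) ^ 3 = t := by
  simpa using rpow_inv_natCast_pow ht (n := 3) (by norm_num)

lemma rpow_one_third_mul_le_iff {a x y : ℝ} (ha : 0 ≤ a) (hx : 0 ≤ x) (hy : 0 ≤ y) :
    a ^ (1 / 3 : ℝ) * x ^ (1 / 3 : ℝ) ≤ y ↔ a * x ≤ y ^ 3 := by
  rw [← mul_rpow ha hx, ← pow_le_pow_iff_left₀ (by positivity) hy three_ne_zero,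
    rpow_one_third_pow_three (mul_nonneg ha hx)]

lemma le_rpow_one_third_mul_iff {a x y : ℝ} (ha : 0 ≤ a) (hx : 0 ≤ x) (hy : 0 ≤ y) :
    y ≤ a ^ (1 / 3 : ℝ) * x ^ (1 / 3 : ℝ) ↔ y ^ 3 ≤ a * x := by
  rw [← mul_rpow ha hx, ← pow_le_pow_iff_left₀ hy (by positivity) three_ne_zero,
    rpow_one_third_pow_three (mul_nonneg ha hx)]

lemma exists_pow_three_le_of_pow_three_le_add_mul_log {B M : ℝ} (hB : 0 ≤ B) (hM : 0 ≤ M) :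
    ∃ c > 0, ∀ x t : ℝ, 1 ≤ x → 2 ≤ t → x ^ 3 ≤ B + M * t * log x →
      x ^ 3 ≤ c * (t * log t) := by
  set A := B + M + 1
  have hlog2 : 0 < log 2 := log_pos one_lt_two
  have hA : 1 ≤ A := by linarith
  set D := (1 + log A / log 2) / 2
  have hD : 0 ≤ D := by have := div_nonneg (log_nonneg hA) hlog2.le; positivity
  refine ⟨B / (2 * log 2) + M * D + 1, by positivity, fun x t hx ht h => ?_⟩
  have hlogt : log 2 ≤ log t := log_le_log two_pos ht
  -- `log x ≤ x` turns the hypothesis into `x ^ 2 ≤ A t`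
  have hsq : x ^ 2 ≤ A * t := by
    have hlx : M * t * log x ≤ M * t * x := by gcongr; exact log_le_self (by linarith)
    have hB' : B ≤ B * (t * x) := le_mul_of_one_le_right hB (by nlinarith)
    nlinarith
  have hlogx : log x ≤ D * log t := by
    have h2 : 2 * log x ≤ log A + log t := by
      rw [← log_mul (by positivity) (by positivity), ← log_rpow (by positivity), rpow_two]
      exact log_le_log (by positivity) hsq
    have h3 : log A ≤ log A / log 2 * log t := by
      rw [div_mul_eq_mul_div, le_div_iff₀ hlog2]
      exact mul_le_mul_of_nonneg_left hlogt (log_nonneg hA)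
    simp only [D]
    linarith
  have htlogt : 2 * log 2 ≤ t * log t := mul_le_mul ht hlogt hlog2.le (by positivity)
  calc x ^ 3 ≤ B + M * t * (D * log t) := h.trans (by gcongr)
    _ ≤ B / (2 * log 2) * (t * log t) + M * D * (t * log t) + 1 * (t * log t) := by
      have : B ≤ B / (2 * log 2) * (t * log t) := by
        rw [div_mul_eq_mul_div, le_div_iff₀ (by positivity)]
        exact mul_le_mul_of_nonneg_left htlogt hB
      nlinarith
    _ = _ := by ring

lemma exists_pos_mul_le_of_forall_ge {P : ℕ → Prop} {f g : ℕ → ℝ} {N : ℕ} {c b : ℝ}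
    (hc : 0 < c) (hb : 0 < b) (hg : ∀ k, 0 ≤ g k) (hlarge : ∀ k, N ≤ k → c * g k ≤ f k)
    (hsmall : ∀ k, P k → b ≤ f k) : ∃ c' > 0, ∀ k, P k → c' * g k ≤ f k := by
  obtain ⟨G, hG⟩ := ((Set.finite_lt_nat N).image g).bddAbove
  set G' := max G 1
  refine ⟨min c (b / G'), by positivity, fun k hk => ?_⟩
  rcases le_or_gt N k with hNk | hkN
  · exact (mul_le_mul_of_nonneg_right (min_le_left _ _) (hg k)).trans (hlarge k hNk)
  · have hgk : g k ≤ G' := (hG ⟨k, hkN, rfl⟩).trans (le_max_left _ _)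
    calc min c (b / G') * g k ≤ b / G' * G' :=
          mul_le_mul (min_le_right _ _) hgk (hg k) (by positivity)
      _ = b := div_mul_cancel₀ _ (by positivity)
      _ ≤ f k := hsmall k hk

lemma exists_inv_mul_le_and_le_mul {ι : Type*} {P : ι → Prop} {f g : ι → ℝ} {a b : ℝ}
    (ha : 0 < a) (hg : ∀ i, P i → 0 ≤ g i)
    (hlo : ∀ i, P i → a * g i ≤ f i) (hhi : ∀ i, P i → f i ≤ b * g i) :
    ∃ C > 0, ∀ i, P i → C⁻¹ * g i ≤ f i ∧ f i ≤ C * g i := by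
  refine ⟨max a⁻¹ b, by positivity, fun i hi => ⟨?_, ?_⟩⟩
  · refine le_trans ?_ (hlo i hi)
    gcongr
    · exact hg i hi
    · exact inv_le_of_inv_le₀ ha (le_max_left _ _)
  · exact (hhi i hi).trans (by gcongr; exacts [hg i hi, le_max_right _ _])

lemma mul_log_le_six_mul_mul_log_div_two {n : ℕ} (hn : 9 ≤ n) :
    (n : ℝ) * log n ≤ 6 * ((n / 2 : ℕ) * log (n / 2 : ℕ)) := by
  have h3 : n ≤ 3 * (n / 2) := by omega
  have hsq : n ≤ (n / 2) ^ 2 := by nlinarith [Nat.div_mul_le_self n 2]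
  have h3' : (n : ℝ) ≤ 3 * (n / 2 : ℕ) := by exact_mod_cast h3
  have hsq' : log n ≤ 2 * log (n / 2 : ℕ) := by
    have := log_le_log (by positivity) (show (n : ℝ) ≤ ((n / 2 : ℕ) : ℝ) ^ 2 by exact_mod_cast hsq)
    rwa [log_pow, Nat.cast_ofNat] at this
  have : 0 ≤ log n := log_natCast_nonneg n
  nlinarith

lemma exists_log_le_six_mul_log {x : ℕ → ℝ} {c : ℝ} (hc : 0 < c)
    (h : ∀ k, 1 ≤ k → c * k ≤ x k ^ 3) : ∃ N : ℕ, ∀ k : ℕ, N ≤ k → log k ≤ 6 * log (x k) := by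
  refine ⟨⌈(c ^ 2)⁻¹⌉₊ + 1, fun k hNk => ?_⟩
  have hk : (c ^ 2)⁻¹ ≤ k := (Nat.le_ceil _).trans (by exact_mod_cast (Nat.le_succ _).trans hNk)
  have hk0 : (0 : ℝ) < k := by exact_mod_cast (show 0 < k by omega)
  have hsq : (k : ℝ) ≤ x k ^ 6 :=
    calc (k : ℝ) ≤ (c * k) ^ 2 := by
          rw [inv_le_iff_one_le_mul₀ (by positivity)] at hk; nlinarith
      _ ≤ (x k ^ 3) ^ 2 := pow_le_pow_left₀ (by positivity) (h k (by omega)) 2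
      _ = x k ^ 6 := by ring
  simpa [log_pow] using log_le_log hk0 hsq

section Sequence

variable {C : ℝ} {S : ℕ → ℝ}

lemma pow_three_increment_bounds (hS : ∀ k, 1 ≤ k → 2 ≤ S k) (hmono : Monotone S)
    (hinc : ∀ k : ℕ, 2 ≤ k →
      C⁻¹ * S k ^ (-(2:ℝ)) * log (S k) ≤ S k - S (k - 1) ∧
      S k - S (k - 1) ≤ C * S k ^ (-(2:ℝ)) * log (S k))
    {j : ℕ} (hj : 1 ≤ j) :
    C⁻¹ * log (S (j + 1)) ≤ S (j + 1) ^ 3 - S j ^ 3 ∧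
      S (j + 1) ^ 3 - S j ^ 3 ≤ 3 * C * log (S (j + 1)) := by
  obtain ⟨hlo, hhi⟩ := hinc (j + 1) (by omega)
  have hx : 0 ≤ S j := by linarith [hS j hj]
  have hxy : S j ≤ S (j + 1) := hmono j.le_succ
  have hy : 0 < S (j + 1) := by linarith [hS (j + 1) (by omega)]
  have hdiv : ∀ a, a * S (j + 1) ^ (-(2:ℝ)) * log (S (j + 1)) =
      a * log (S (j + 1)) / S (j + 1) ^ 2 := fun a => by rw [rpow_neg hy.le, rpow_two]; ring
  rw [Nat.add_sub_cancel, hdiv, div_le_iff₀ (by positivity)] at hlo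
  rw [Nat.add_sub_cancel, hdiv, le_div_iff₀ (by positivity)] at hhi
  exact ⟨hlo.trans (sub_mul_sq_le_pow_three_sub_pow_three hx hxy),
    (pow_three_sub_pow_three_le hx hxy).trans (by linarith)⟩

lemma exists_pow_three_le_mul_mul_log (hC : 0 ≤ C) (hS : ∀ k, 1 ≤ k → 2 ≤ S k)
    (hmono : Monotone S) (hhi : ∀ j, 1 ≤ j → S (j + 1) ^ 3 - S j ^ 3 ≤ 3 * C * log (S (j + 1))) :
    ∃ c > 0, ∀ k : ℕ, 2 ≤ k → S k ^ 3 ≤ c * (k * log k) := by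
  obtain ⟨c, hc, hinv⟩ :=
    exists_pow_three_le_of_pow_three_le_add_mul_log (B := S 1 ^ 3) (M := 3 * C)
      (pow_nonneg (by linarith [hS 1 le_rfl]) 3) (by positivity)
  refine ⟨c, hc, fun k hk => hinv _ _ (by linarith [hS k (by omega)]) (by exact_mod_cast hk) ?_⟩
  obtain ⟨n, rfl⟩ : ∃ n, k = 1 + n := ⟨k - 1, by omega⟩
  have hlog : 0 ≤ log (S (1 + n)) := log_nonneg (by linarith [hS (1 + n) (by omega)])
  have hsum := le_add_mul_of_sub_le (f := fun j => S j ^ 3) (m := 1) (n := n)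
    (c := 3 * C * log (S (1 + n)))
    fun j hj hjn => (hhi j hj).trans <| mul_le_mul_of_nonneg_left
      (log_le_log (by linarith [hS (j + 1) (by omega)]) (hmono (by omega))) (by positivity)
  push_cast at hsum ⊢
  nlinarith

lemma exists_mul_le_pow_three (hC : 0 < C) (hS : ∀ k, 1 ≤ k → 2 ≤ S k)
    (hlo : ∀ j, 1 ≤ j → C⁻¹ * log (S (j + 1)) ≤ S (j + 1) ^ 3 - S j ^ 3) :
    ∃ c > 0, ∀ k : ℕ, 1 ≤ k → c * k ≤ S k ^ 3 := by
  have hlog2 : 0 < log 2 := log_pos one_lt_two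
  refine ⟨min 8 (C⁻¹ * log 2), by positivity, fun k hk => ?_⟩
  obtain ⟨n, rfl⟩ : ∃ n, k = 1 + n := ⟨k - 1, by omega⟩
  have hsum := add_mul_le_of_le_sub (f := fun j => S j ^ 3) (m := 1) (n := n) (c := C⁻¹ * log 2)
    fun j hj _ => (hlo j hj).trans' <| by gcongr; exact hS (j + 1) (by omega)
  have h8 : (2 : ℝ) ^ 3 ≤ S 1 ^ 3 := pow_le_pow_left₀ zero_le_two (hS 1 le_rfl) 3
  norm_num at h8
  push_cast at hsum ⊢
  nlinarith [min_le_left 8 (C⁻¹ * log 2), min_le_right 8 (C⁻¹ * log 2)]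

lemma mul_log_le_pow_three_add_self (hC : 0 < C) (hS : ∀ k, 1 ≤ k → 2 ≤ S k)
    (hmono : Monotone S) (hlo : ∀ j, 1 ≤ j → C⁻¹ * log (S (j + 1)) ≤ S (j + 1) ^ 3 - S j ^ 3)
    {m : ℕ} (hm : 1 ≤ m) : C⁻¹ * (m * log (S m)) ≤ S (m + m) ^ 3 := by
  have hsum := add_mul_le_of_le_sub (f := fun j => S j ^ 3) (n := m) (c := C⁻¹ * log (S m))
    fun j hj _ => (hlo j (hm.trans hj)).trans' <| mul_le_mul_of_nonneg_left
      (log_le_log (by linarith [hS m hm]) (hmono (by omega))) (by positivity)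
  have : 0 ≤ S m ^ 3 := pow_nonneg (by linarith [hS m hm]) 3
  linarith

lemma exists_mul_log_le_pow_three (hC : 0 < C) (hS : ∀ k, 1 ≤ k → 2 ≤ S k)
    (hmono : Monotone S) (hlo : ∀ j, 1 ≤ j → C⁻¹ * log (S (j + 1)) ≤ S (j + 1) ^ 3 - S j ^ 3) :
    ∃ c > 0, ∀ k : ℕ, 2 ≤ k → c * (k * log k) ≤ S k ^ 3 := by
  obtain ⟨c, hc, hlin⟩ := exists_mul_le_pow_three hC hS hlo
  obtain ⟨N, hN⟩ := exists_log_le_six_mul_log hc hlin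
  refine exists_pos_mul_le_of_forall_ge (N := max (2 * N) 9) (c := C⁻¹ / 36) (b := 8)
    (by positivity) (by norm_num) (fun k => by positivity) (fun n hn => ?_)
    (fun k hk => le_trans (by norm_num) (pow_le_pow_left₀ zero_le_two (hS k (by omega)) 3))
  have hm : 1 ≤ n / 2 := by omega
  calc C⁻¹ / 36 * (n * log n) ≤ C⁻¹ / 6 * ((n / 2 : ℕ) * log (n / 2 : ℕ)) := by
        nlinarith [mul_log_le_six_mul_mul_log_div_two (le_of_max_le_right hn), inv_pos.2 hC]
    _ ≤ C⁻¹ * ((n / 2 : ℕ) * log (S (n / 2))) := by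
        have := hN (n / 2) (by omega)
        have : 0 ≤ C⁻¹ * (n / 2 : ℕ) := by positivity
        nlinarith
    _ ≤ S (n / 2 + n / 2) ^ 3 := mul_log_le_pow_three_add_self hC hS hmono hlo hm
    _ ≤ S n ^ 3 :=
        pow_le_pow_left₀ (by linarith [hS (n / 2 + n / 2) (by omega)]) (hmono (by omega)) 3

end Sequence

theorem discrete_ode_critical_general (C : ℝ) (hC : 1 ≤ C)
    (S : ℕ → ℝ) (h1 : 2 ≤ S 1) (hmono : Monotone S)
    (hinc : ∀ k : ℕ, 2 ≤ k →
      C⁻¹ * (S k) ^ (-(2:ℝ)) * Real.log (S k) ≤ S k - S (k - 1) ∧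
      S k - S (k - 1) ≤ C * (S k) ^ (-(2:ℝ)) * Real.log (S k)) :
    ∃ C' > 0, ∀ k : ℕ, 2 ≤ k →
      C'⁻¹ * ((k:ℝ) * Real.log k) ^ ((1:ℝ) / 3) ≤ S k ∧
      S k ≤ C' * ((k:ℝ) * Real.log k) ^ ((1:ℝ) / 3) := by
  have hC0 : 0 < C := by linarith
  have hS : ∀ k, 1 ≤ k → 2 ≤ S k := fun k hk => h1.trans (hmono hk)
  have hstep := fun j (hj : 1 ≤ j) => pow_three_increment_bounds hS hmono hinc hj
  obtain ⟨a, ha, hlo⟩ := exists_mul_log_le_pow_three hC0 hS hmono fun j hj => (hstep j hj).1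
  obtain ⟨b, hb, hhi⟩ := exists_pow_three_le_mul_mul_log hC0.le hS hmono fun j hj => (hstep j hj).2
  have hSk : ∀ k, 2 ≤ k → 0 ≤ S k := fun k hk => by linarith [hS k (by omega)]
  refine exists_inv_mul_le_and_le_mul (P := fun k : ℕ => 2 ≤ k) (a := a ^ (1 / 3 : ℝ))
    (b := b ^ (1 / 3 : ℝ)) (rpow_pos_of_pos ha _)
    (fun k _ => by positivity) (fun k hk => ?_) (fun k hk => ?_)
  · exact (rpow_one_third_mul_le_iff ha.le (by positivity) (hSk k hk)).2 (hlo k hk)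
  · exact (le_rpow_one_third_mul_iff hb.le (by positivity) (hSk k hk)).2 (hhi k hk)

theorem discrete_ode_critical (C : ℝ) (hC : 1 ≤ C)
    (S : ℕ → ℝ) (h0 : S 0 = 0) (h1 : 2 ≤ S 1) (hmono : Monotone S)
    (hcomp : ∀ k : ℕ, 1 ≤ k → S (k + 1) ≤ C * S k)
    (hinc : ∀ k : ℕ, 2 ≤ k →
      C⁻¹ * (S k) ^ (-(2:ℝ)) * Real.log (S k) ≤ S k - S (k - 1) ∧
      S k - S (k - 1) ≤ C * (S k) ^ (-(2:ℝ)) * Real.log (S k)) :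
    ∃ C' > 0, ∀ k : ℕ, 2 ≤ k →
      C'⁻¹ * ((k:ℝ) * Real.log k) ^ ((1:ℝ) / 3) ≤ S k ∧
      S k ≤ C' * ((k:ℝ) * Real.log k) ^ ((1:ℝ) / 3) :=
  discrete_ode_critical_general C hC S h1 hmono hinc
end
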